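/- For all real numbers b and x: (b + ei(b)/Φᶜ(b) − x) / ei(x) ≤ 1/Φᶜ(b). -/

import Mathlib

/-!
Writing `ei x = ∫_{u > x} (u - x) φ(u) du`, the integrand `(u - x) φ(u)` is nonnegative exactly
on `u ≥ x`, so its integral over any other half-line `u > b` is smaller. That integral is
`ei b - Φᶜ(b) (x - b)`, the tangent line of `ei` at `b`; since `ei > 0` and `Φᶜ > 0`, clearing
denominators reduces the claim to this tangent-line inequality.
-/

open MeasureTheory

/-- The standard normal density `φ(x) = (2π)^{-1/2} exp(-x²/2)`. -/
noncomputable def stdNormalPDF (x : ℝ) : ℝ :=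
  (Real.sqrt (2 * Real.pi))⁻¹ * Real.exp (-x ^ 2 / 2)

/-- The standard normal complementary CDF `Φᶜ(x) = ∫_x^∞ φ(u) du`. -/
noncomputable def stdNormalCCDF (x : ℝ) : ℝ :=
  ∫ u in Set.Ioi x, stdNormalPDF u

/-- The standard expected improvement `ei(x) = φ(x) - x·Φᶜ(x)`. -/
noncomputable def stdEI (x : ℝ) : ℝ :=
  stdNormalPDF x - x * stdNormalCCDF x

open Set Filter Topology

lemma setIntegral_Ioi_pos {f : ℝ → ℝ} {a : ℝ} (hf : IntegrableOn f (Ioi a))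
    (hpos : ∀ u ∈ Ioi a, 0 < f u) : 0 < ∫ u in Ioi a, f u := by
  have hsupp : Function.support f ∩ Ioi a = Ioi a := inter_eq_right.2 fun u hu => (hpos u hu).ne'
  rw [setIntegral_pos_iff_support_of_nonneg_ae
    ((ae_restrict_iff' measurableSet_Ioi).2 (ae_of_all _ fun u hu => (hpos u hu).le)) hf, hsupp]
  simp

lemma stdNormalPDF_pos (x : ℝ) : 0 < stdNormalPDF x := by
  unfold stdNormalPDF
  positivity

lemma continuous_stdNormalPDF : Continuous stdNormalPDF := by
  unfold stdNormalPDF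
  fun_prop

lemma stdNormalPDF_eq_gaussianPDFReal : stdNormalPDF = ProbabilityTheory.gaussianPDFReal 0 1 := by
  ext x
  simp [stdNormalPDF, ProbabilityTheory.gaussianPDFReal]

lemma integrable_stdNormalPDF : Integrable stdNormalPDF :=
  stdNormalPDF_eq_gaussianPDFReal ▸ ProbabilityTheory.integrable_gaussianPDFReal 0 1

lemma integrable_id_mul_stdNormalPDF : Integrable fun u => u * stdNormalPDF u := by
  refine ((integrable_mul_exp_neg_mul_sq (b := 1 / 2) (by norm_num)).const_mul
    (Real.sqrt (2 * Real.pi))⁻¹).congr (ae_of_all _ fun u => ?_)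
  simp only [stdNormalPDF]
  ring_nf

lemma integrable_sub_mul_stdNormalPDF (x : ℝ) :
    Integrable fun u => (u - x) * stdNormalPDF u :=
  (integrable_id_mul_stdNormalPDF.sub (integrable_stdNormalPDF.const_mul x)).congr
    (ae_of_all _ fun u => (sub_mul u x _).symm)

lemma hasDerivAt_stdNormalPDF (x : ℝ) : HasDerivAt stdNormalPDF (-x * stdNormalPDF x) x := by
  have h : HasDerivAt (fun u : ℝ => -u ^ 2 / 2) (-x) x :=
    ((hasDerivAt_pow 2 x).neg.div_const 2).congr_deriv (by ring)
  exact (h.exp.const_mul (Real.sqrt (2 * Real.pi))⁻¹).congr_deriv (by rw [stdNormalPDF]; ring)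

lemma tendsto_stdNormalPDF_atTop : Tendsto stdNormalPDF atTop (𝓝 0) := by
  have h : Tendsto (fun u : ℝ => -u ^ 2 / 2) atTop atBot := by
    simpa only [Function.comp_def, neg_div] using
      tendsto_neg_atTop_atBot.comp ((tendsto_pow_atTop two_ne_zero).atTop_div_const two_pos)
  have hexp := (Real.tendsto_exp_atBot.comp h).const_mul (Real.sqrt (2 * Real.pi))⁻¹
  rw [mul_zero] at hexp
  exact hexp

lemma integral_Ioi_id_mul_stdNormalPDF (a : ℝ) :
    ∫ u in Ioi a, u * stdNormalPDF u = stdNormalPDF a := by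
  have h := integral_Ioi_of_hasDerivAt_of_tendsto' (a := a)
    (fun u _ => (hasDerivAt_stdNormalPDF u).neg)
    (by simpa only [neg_mul, neg_neg] using integrable_id_mul_stdNormalPDF.integrableOn)
    tendsto_stdNormalPDF_atTop.neg
  simpa using h

lemma integral_Ioi_sub_mul_stdNormalPDF (a x : ℝ) :
    ∫ u in Ioi a, (u - x) * stdNormalPDF u = stdNormalPDF a - x * stdNormalCCDF a := by
  simp only [sub_mul]
  rw [integral_sub integrable_id_mul_stdNormalPDF.integrableOn
    (integrable_stdNormalPDF.const_mul x).integrableOn, integral_const_mul,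
    integral_Ioi_id_mul_stdNormalPDF, stdNormalCCDF]

lemma stdEI_eq_integral_Ioi (x : ℝ) : stdEI x = ∫ u in Ioi x, (u - x) * stdNormalPDF u := by
  rw [integral_Ioi_sub_mul_stdNormalPDF, stdEI]

lemma stdNormalCCDF_pos (x : ℝ) : 0 < stdNormalCCDF x :=
  setIntegral_Ioi_pos integrable_stdNormalPDF.integrableOn fun u _ => stdNormalPDF_pos u

lemma stdEI_pos (x : ℝ) : 0 < stdEI x := by
  rw [stdEI_eq_integral_Ioi]
  exact setIntegral_Ioi_pos (integrable_sub_mul_stdNormalPDF x).integrableOn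
    fun u hu => mul_pos (sub_pos.2 hu) (stdNormalPDF_pos u)

lemma stdEI_sub_stdNormalCCDF_mul_le (b x : ℝ) :
    stdEI b - stdNormalCCDF b * (x - b) ≤ stdEI x := by
  have hnonneg : {u | 0 ≤ (u - x) * stdNormalPDF u} = Ici x := by
    ext u
    simp [mul_nonneg_iff_of_pos_right (stdNormalPDF_pos u)]
  calc stdEI b - stdNormalCCDF b * (x - b) = ∫ u in Ioi b, (u - x) * stdNormalPDF u := by
        rw [integral_Ioi_sub_mul_stdNormalPDF, stdEI]
        ring
    _ ≤ ∫ u in {u | 0 ≤ (u - x) * stdNormalPDF u}, (u - x) * stdNormalPDF u :=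
        setIntegral_le_nonneg measurableSet_Ioi
          ((continuous_id.sub continuous_const).mul continuous_stdNormalPDF).stronglyMeasurable
          (integrable_sub_mul_stdNormalPDF x)
    _ = stdEI x := by rw [hnonneg, integral_Ici_eq_integral_Ioi, stdEI_eq_integral_Ioi]

/-- The 'optimizing for x' step in the proof of the paper's main theorem:
`(b − ei(b)/ei'(b) − x)/ei(x) ≤ −1/ei'(b)` for all reals `b, x`
(recall `ei'(x) = −Φᶜ(x)`). -/
theorem stmt15 (b x : ℝ) :
    (b + stdEI b / stdNormalCCDF b - x) / stdEI x ≤ 1 / stdNormalCCDF b := by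
  have hΦ := stdNormalCCDF_pos b
  rw [div_le_div_iff₀ (stdEI_pos x) hΦ, add_sub_right_comm, add_mul, div_mul_cancel₀ _ hΦ.ne']
  linarith [stdEI_sub_stdNormalCCDF_mul_le b x]
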